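/- Let r, s be positive integers with g = gcd(r,s), and let f be a binary string with |f| > r + s - g and t ≤ |f| + g - r - s. Suppose the equations f_{t+(i-1)g} = f_{t+(i-1)g+s} hold for all i ∈ {1,...,r/g} \ {i_1} and the equations f_{t+(j-1)g} = f_{t+(j-1)g+r} hold for all j ∈ {1,...,s/g} \ {j_1}. Then f_{t+(i_1-1)g} = f_{t+(j_1-1)g} and f_{t+(i_1-1)g+s} = f_{t+(j_1-1)g+r}. -/

import Mathlib

/-- `bitEq f p q` says that the `p`-th and `q`-th bits (1-based) of the binary
string `f` are equal. -/
def bitEq {n : ℕ} (f : Fin n → Bool) (p q : ℕ) : Prop :=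
  ∀ (hp : p - 1 < n) (hq : q - 1 < n), f ⟨p - 1, hp⟩ = f ⟨q - 1, hq⟩

/-!
Write `a = r / g`, `b = s / g` and index the positions `t + x * g`, `x < a + b`, by
`x : ZMod (a + b)`. Equation (2) for `i` joins `x = i - 1` to `x + b`, and equation (3) for `j`
joins `x = a + j - 1` to `x + b = j - 1`. So the equations are the edges `x — x + b` of
`ZMod (a + b)`, which form a single cycle because `b` is coprime to `a + b`. Removing the two
edges of `i₁` and `j₁` cuts the cycle into two arcs on which `f` is constant, and the ends of the
arcs are the four positions of the conclusion.
-/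

section CycleCut

variable {G α : Type*} [AddLeftCancelMonoid G] {P : G → α} {w b : G}

theorem apply_add_nsmul_eq_of_forall_Ico {i j : ℕ} (hij : i ≤ j)
    (hP : ∀ k, i ≤ k → k < j → P (w + k • b) = P (w + (k + 1) • b)) :
    P (w + i • b) = P (w + j • b) := by
  induction j, hij using Nat.le_induction with
  | base => rfl
  | succ j hij ih =>
    rw [ih fun k hik hkj => hP k hik (by omega), hP j hij (by omega)]

/-- The orbit of `w` under `x ↦ x + b` is a cycle of length `addOrderOf b`; cutting it at the
edges leaving `w` and `w + e • b` leaves two arcs, along each of which `P` is constant. -/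
theorem apply_add_eq_and_apply_add_eq_of_forall_ne {e : ℕ} (he₀ : 0 < e) (he : e < addOrderOf b)
    (hP : ∀ x, x ≠ w + e • b → x ≠ w → P x = P (x + b)) :
    P (w + b) = P (w + e • b) ∧ P (w + e • b + b) = P w := by
  have step : ∀ k, 0 < k → k < addOrderOf b → k ≠ e →
      P (w + k • b) = P (w + (k + 1) • b) := by
    intro k hk₀ hk hke
    rw [succ_nsmul, ← add_assoc]
    refine hP _ (fun h => hke (nsmul_injOn_Iio_addOrderOf hk he (add_left_cancel h))) fun h => ?_
    have : k • b = (0 : ℕ) • b := by rw [zero_nsmul]; exact add_eq_left.mp h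
    exact hk₀.ne' (nsmul_injOn_Iio_addOrderOf hk (show 0 < addOrderOf b by omega) this)
  constructor
  · simpa using apply_add_nsmul_eq_of_forall_Ico he₀ fun k hk hke =>
      step k hk (by omega) (by omega)
  · simpa [succ_nsmul, add_assoc, addOrderOf_nsmul_eq_zero] using
      apply_add_nsmul_eq_of_forall_Ico (w := w) (P := P) he fun k hk hke =>
        step k (by omega) hke (by omega)

end CycleCut

theorem eq_and_add_eq_of_forall_shift_eq {α : Type*} {a b u v : ℕ} (hab : a.Coprime b)
    (hu : u < a) (hv : v < b) (Q : ℕ → α)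
    (hQa : ∀ x < a, x ≠ u → Q x = Q (x + b)) (hQb : ∀ y < b, y ≠ v → Q y = Q (y + a)) :
    Q v = Q u ∧ Q (u + b) = Q (v + a) := by
  set m := a + b
  have : NeZero m := ⟨by omega⟩
  have hbm : b.Coprime m := Nat.coprime_add_self_right.mpr hab.symm
  have horder : addOrderOf (b : ZMod m) = m := by
    rw [ZMod.addOrderOf_coe _ (NeZero.ne m), Nat.gcd_comm, hbm, Nat.div_one]
  set β := ZMod.unitOfCoprime b hbm
  obtain ⟨w, hw⟩ : ∃ w : ZMod m, w = (v + a : ℕ) := ⟨_, rfl⟩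
  -- `b` is a unit, so `u` is reached from `w` in `e` steps of `b`
  set e := ((u - w) * ↑β⁻¹ : ZMod m).val
  have he : w + e • (b : ZMod m) = u := by
    rw [nsmul_eq_mul, ZMod.natCast_zmod_val, mul_assoc, show (b : ZMod m) = β from rfl,
      Units.inv_mul, mul_one, add_sub_cancel]
  have he₀ : 0 < e := by
    refine Nat.pos_of_ne_zero fun h => ?_
    rw [h, zero_nsmul, add_zero] at he
    have := congrArg ZMod.val he
    rw [hw, ZMod.val_cast_of_lt (by omega), ZMod.val_cast_of_lt (by omega)] at this
    omega
  have hP : ∀ x : ZMod m, x ≠ u → x ≠ w → Q x.val = Q (x + b).val := by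
    intro x hxu hxw
    obtain ⟨k, hk, rfl⟩ : ∃ k < m, x = k :=
      ⟨x.val, x.val_lt, (ZMod.natCast_zmod_val x).symm⟩
    by_cases hka : k < a
    · rw [← Nat.cast_add, ZMod.val_cast_of_lt hk, ZMod.val_cast_of_lt (by omega)]
      exact hQa k hka fun h => hxu (by rw [h])
    · obtain ⟨y, rfl⟩ : ∃ y, k = y + a := ⟨k - a, by omega⟩
      have hwrap : ((y + a : ℕ) : ZMod m) + b = y := by
        rw [← Nat.cast_add, add_assoc, Nat.cast_add, ZMod.natCast_self, add_zero]
      rw [hwrap, ZMod.val_cast_of_lt hk, ZMod.val_cast_of_lt (by omega)]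
      exact (hQb y (by omega) fun h => hxw (by rw [hw, h])).symm
  obtain ⟨h₁, h₂⟩ :=
    apply_add_eq_and_apply_add_eq_of_forall_ne (P := fun x : ZMod m => Q x.val) he₀
      (by rw [horder]; exact ZMod.val_lt _) (he ▸ hP)
  rw [he] at h₁ h₂
  have hwb : w + b = v := by
    rw [hw, ← Nat.cast_add, add_assoc, Nat.cast_add, ZMod.natCast_self, add_zero]
  rw [hwb, ZMod.val_cast_of_lt (by omega), ZMod.val_cast_of_lt (by omega)] at h₁
  rw [← Nat.cast_add, hw, ZMod.val_cast_of_lt (by omega), ZMod.val_cast_of_lt (by omega)] at h₂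
  exact ⟨h₁, h₂⟩

/-- Position `p` (1-based) of `f`; out-of-range positions read as `false`. -/
def bitAt {n : ℕ} (f : Fin n → Bool) (p : ℕ) : Bool :=
  if h : p - 1 < n then f ⟨p - 1, h⟩ else false

theorem bitEq_of_bitAt_eq {n p q : ℕ} {f : Fin n → Bool} (h : bitAt f p = bitAt f q) :
    bitEq f p q := by
  intro hp hq
  simpa [bitAt, hp, hq] using h

theorem bitAt_eq_of_bitEq {n p q : ℕ} {f : Fin n → Bool} (hp : p - 1 < n) (hq : q - 1 < n)
    (h : bitEq f p q) : bitAt f p = bitAt f q := by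
  simpa [bitAt, hp, hq] using h hp hq

theorem stmt_19_general (n r s t : ℕ)
    (g : ℕ) (hg : g = Nat.gcd r s)
    (hn : r + s - g < n) (htn : t ≤ n + g - r - s) (f : Fin n → Bool)
    (i₁ j₁ : ℕ) (hi₁ : i₁ ∈ Finset.Icc 1 (r / g)) (hj₁ : j₁ ∈ Finset.Icc 1 (s / g))
    (h2 : ∀ i ∈ Finset.Icc 1 (r / g), i ≠ i₁ →
      bitEq f (t + (i - 1) * g) (t + (i - 1) * g + s))
    (h3 : ∀ j ∈ Finset.Icc 1 (s / g), j ≠ j₁ →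
      bitEq f (t + (j - 1) * g) (t + (j - 1) * g + r)) :
    bitEq f (t + (i₁ - 1) * g) (t + (j₁ - 1) * g) ∧
      bitEq f (t + (i₁ - 1) * g + s) (t + (j₁ - 1) * g + r) := by
  rw [Finset.mem_Icc] at hi₁ hj₁
  have hg₀ : 0 < g := Nat.pos_of_ne_zero fun h => by simp [h] at hi₁; omega
  have hr : r / g * g = r := hg ▸ Nat.div_mul_cancel (Nat.gcd_dvd_left r s)
  have hs : s / g * g = s := hg ▸ Nat.div_mul_cancel (Nat.gcd_dvd_right r s)
  have hbound : ∀ k < r / g + s / g, t + k * g - 1 < n := fun k hk => by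
    have : (k + 1) * g ≤ r + s := by
      rw [← hr, ← hs, ← add_mul]; exact Nat.mul_le_mul_right g hk
    rw [add_one_mul] at this
    omega
  obtain ⟨h₁, h₂⟩ := eq_and_add_eq_of_forall_shift_eq
    (hg ▸ Nat.coprime_div_gcd_div_gcd (hg ▸ hg₀)) (u := i₁ - 1) (v := j₁ - 1)
    (by omega) (by omega)
    (fun k => bitAt f (t + k * g))
    (fun x hx hxu => bitAt_eq_of_bitEq (hbound x (by omega)) (hbound _ (by omega)) <| by
      rw [add_mul, hs, ← add_assoc]
      simpa using h2 (x + 1) (Finset.mem_Icc.mpr (by omega)) (by omega))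
    (fun y hy hyv => bitAt_eq_of_bitEq (hbound y (by omega)) (hbound _ (by omega)) <| by
      rw [add_mul, hr, ← add_assoc]
      simpa using h3 (y + 1) (Finset.mem_Icc.mpr (by omega)) (by omega))
  refine ⟨bitEq_of_bitAt_eq h₁.symm, bitEq_of_bitAt_eq ?_⟩
  simpa only [add_mul, hr, hs, add_assoc] using h₂

/-- Lemma 2.6 (iii): if equations (2) hold for all `i ≠ i₁` and equations (3)
hold for all `j ≠ j₁`, then `f_{t+(i₁-1)g} = f_{t+(j₁-1)g}` and
`f_{t+(i₁-1)g+s} = f_{t+(j₁-1)g+r}`. -/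
theorem stmt_19 (n r s t : ℕ) (hr : 0 < r) (hs : 0 < s) (ht : 0 < t)
    (g : ℕ) (hg : g = Nat.gcd r s)
    (hn : r + s - g < n) (htn : t ≤ n + g - r - s) (f : Fin n → Bool)
    (i₁ j₁ : ℕ) (hi₁ : i₁ ∈ Finset.Icc 1 (r / g)) (hj₁ : j₁ ∈ Finset.Icc 1 (s / g))
    (h2 : ∀ i ∈ Finset.Icc 1 (r / g), i ≠ i₁ →
      bitEq f (t + (i - 1) * g) (t + (i - 1) * g + s))
    (h3 : ∀ j ∈ Finset.Icc 1 (s / g), j ≠ j₁ →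
      bitEq f (t + (j - 1) * g) (t + (j - 1) * g + r)) :
    bitEq f (t + (i₁ - 1) * g) (t + (j₁ - 1) * g) ∧
      bitEq f (t + (i₁ - 1) * g + s) (t + (j₁ - 1) * g + r) :=
  stmt_19_general n r s t g hg hn htn f i₁ j₁ hi₁ hj₁ h2 h3
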